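/- Let n > 1 be an odd integer, D a square-free positive integer, p a prime with p ≡ 3 (mod 4), and x an integer satisfying x² + D = pⁿ and x² < pⁿ/2. Then the ideal class group of the imaginary quadratic field ℚ(√−D) contains an element of order n. -/

import Mathlib

/-!
Put `α = x + √-D`. Its norm is `x² + D = pⁿ` and `p ∤ α`, so `𝔭 = (p, α)` is a prime of norm `p`,
it is the only prime containing `α`, and `(α) = 𝔭ⁿ`. Thus the class of `𝔭` has order dividing `n`.
If `𝔭^m` were principal for `m = n / q` with `q ∣ n` prime, then `q ≥ 3` and `m` is odd, and a
generator `(a + b√-D) / 2` would give `4pᵐ = a² + Db²` with `b ≠ 0` (as `pᵐ` is not a square).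
Hence `D ≤ 4pᵐ`, while `2x² < pⁿ` gives `pⁿ < 2D`, so `pⁿ < 8pᵐ`; but `n ≥ 3m` and `p ≥ 3` give
`pⁿ ≥ p³ᵐ > 8pᵐ`.
-/

open IntermediateField NumberField Ideal
open scoped nonZeroDivisors

theorem Rat.exists_intCast_eq_of_squarefree_mul_sq {D : ℕ} (hD : Squarefree D) {q : ℚ} {t : ℤ}
    (h : D * q ^ 2 = t) : ∃ b : ℤ, (b : ℚ) = q := by
  refine ⟨q.num, ?_⟩
  suffices q.den = 1 by rw [← Rat.num_div_den q, this]; simp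
  have hnum : (D : ℤ) * q.num ^ 2 = t * q.den ^ 2 := by
    have : (q.num : ℚ) = q * q.den := (Rat.mul_den_eq_num q).symm
    exact_mod_cast (by rw [this, ← h]; ring : (D : ℚ) * q.num ^ 2 = t * q.den ^ 2)
  have hcop : IsCoprime (q.den ^ 2 : ℤ) (q.num ^ 2) :=
    (Int.isCoprime_iff_gcd_eq_one.mpr (by simpa [Int.gcd] using q.reduced.symm)).pow
  have hdvd : (q.den ^ 2 : ℤ) ∣ D := hcop.dvd_of_dvd_mul_right ⟨t, by rw [hnum]; ring⟩
  exact Nat.isUnit_iff.mp (hD q.den (by rw [← sq]; exact_mod_cast hdvd))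

theorem Nat.sq_ne_four_mul_prime_pow {p m : ℕ} (hp : p.Prime) (hm : Odd m) (a : ℕ) :
    a ^ 2 ≠ 4 * p ^ m := by
  intro h
  obtain ⟨t, rfl⟩ : 2 ∣ a := Nat.prime_two.dvd_of_dvd_pow (n := 2) ⟨2 * p ^ m, by rw [h]; ring⟩
  have ht : t ^ 2 = p ^ m := by linarith
  have := congrArg (·.factorization p) ht
  simp only [Nat.factorization_pow, hp.factorization_self, Finsupp.smul_apply, smul_eq_mul,
    mul_one] at this
  exact Nat.not_even_iff_odd.mpr hm ⟨t.factorization p, by omega⟩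

theorem le_four_mul_prime_pow_of_four_mul_eq {D p m : ℕ} (hp : p.Prime) (hm : Odd m) {a b : ℤ}
    (h : 4 * (p : ℤ) ^ m = a ^ 2 + D * b ^ 2) : (D : ℤ) ≤ 4 * p ^ m := by
  rcases eq_or_ne b 0 with rfl | hb
  · refine absurd ?_ (Nat.sq_ne_four_mul_prime_pow hp hm a.natAbs)
    zify
    rw [sq_abs]
    linarith
  · have : 1 ≤ b ^ 2 := by nlinarith [Int.one_le_abs hb, sq_abs b]
    nlinarith [sq_nonneg a]

theorem eight_mul_pow_lt_pow {p m n : ℕ} (hp : 3 ≤ p) (hm : m ≠ 0) (hmn : 3 * m ≤ n) :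
    8 * p ^ m < p ^ n := by
  have hpm : 3 ≤ p ^ m := le_trans hp (Nat.le_self_pow hm p)
  calc 8 * p ^ m < (p ^ m) ^ 3 := by
        generalize p ^ m = q at hpm ⊢
        nlinarith [Nat.mul_le_mul hpm hpm, pow_succ q 2]
    _ = p ^ (3 * m) := by rw [← pow_mul, mul_comm]
    _ ≤ p ^ n := Nat.pow_le_pow_right (by omega) hmn

namespace Ideal

theorem exists_eq_pow_of_forall_isPrime_le {R : Type*} [CommRing R] [IsDedekindDomain R]
    {I P : Ideal R} (hI : I ≠ ⊥) (h : ∀ Q : Ideal R, Q.IsPrime → I ≤ Q → Q = P) :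
    ∃ k : ℕ, I = P ^ k := by
  obtain ⟨k, hk⟩ :=
    UniqueFactorizationMonoid.exists_associated_prime_pow_of_unique_normalized_factor
      (fun {Q} hQ => h Q
        (isPrime_of_prime (UniqueFactorizationMonoid.prime_of_normalized_factor Q hQ))
        (le_of_dvd (UniqueFactorizationMonoid.dvd_of_mem_normalizedFactors hQ))) hI
  exact ⟨k, (associated_iff_eq.mp hk).symm⟩

variable {S : Type*} [CommRing S] [IsDedekindDomain S] [Module.Free ℤ S]

theorem eq_of_le_of_absNorm_eq {I J : Ideal S} (hIJ : I ≤ J) (h : absNorm J = absNorm I)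
    (hI : absNorm I ≠ 0) : I = J := by
  obtain ⟨C, rfl⟩ := dvd_iff_le.mpr hIJ
  rw [map_mul, left_eq_mul₀ (left_ne_zero_of_mul (map_mul absNorm J C ▸ hI)),
    absNorm_eq_one_iff] at h
  rw [h, mul_top]

theorem natCast_mem_of_absNorm_span_eq_pow {α : S} {p n : ℕ} (hp : p.Prime)
    (hα : absNorm (span {α}) = p ^ n) {P : Ideal S} [hP : P.IsPrime] (hαP : α ∈ P) :
    (p : S) ∈ P := by
  obtain ⟨k, -, hk⟩ := (Nat.dvd_prime_pow hp).mp
    (hα ▸ absNorm_dvd_absNorm_of_le ((span_singleton_le_iff_mem P).mpr hαP))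
  exact hP.mem_of_pow_mem k (by simpa [hk] using absNorm_mem P)

variable [Module.Finite ℤ S]

theorem absNorm_span_natCast_pair (hS : Module.finrank ℤ S = 2) {α : S} {p n : ℕ}
    (hp : p.Prime) (hn : n ≠ 0) (hα : absNorm (span {α}) = p ^ n) (hpα : ¬ (p : S) ∣ α) :
    absNorm (span {(p : S), α}) = p := by
  set A := span {(p : S), α}
  have hpA : span {(p : S)} ≤ A := span_mono (by simp)
  have hαA : α ∈ A := subset_span (by simp)
  have hNp : absNorm (span {(p : S)}) = p ^ 2 := by rw [absNorm_span_natCast, hS]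
  obtain ⟨k, hk, hAk⟩ := (Nat.dvd_prime_pow hp).mp (hNp ▸ absNorm_dvd_absNorm_of_le hpA)
  interval_cases k
  · obtain ⟨M, hM, hαM⟩ := exists_le_maximal (span {α}) (by
      rw [Ne, ← absNorm_eq_one_iff, hα]
      exact (Nat.one_lt_pow hn hp.one_lt).ne')
    have hαM := (span_singleton_le_iff_mem M).mp hαM
    have hAM : A ≤ M := span_le.mpr (by
      simp [Set.insert_subset_iff, natCast_mem_of_absNorm_span_eq_pow hp hα hαM, hαM])
    exact absurd (absNorm_eq_one_iff.mp hAk) (ne_top_of_le_ne_top hM.ne_top hAM)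
  · simpa using hAk
  · have hpA : span {(p : S)} = A :=
      eq_of_le_of_absNorm_eq hpA (by rw [hAk, hNp]) (by simp [hNp, hp.ne_zero])
    exact absurd (mem_span_singleton.mp (hpA ▸ hαA)) hpα

theorem span_singleton_eq_span_natCast_pair_pow (hS : Module.finrank ℤ S = 2) {α : S}
    {p n : ℕ} (hp : p.Prime) (hn : n ≠ 0) (hα : absNorm (span {α}) = p ^ n)
    (hpα : ¬ (p : S) ∣ α) : span {α} = span {(p : S), α} ^ n := by
  set A := span {(p : S), α}
  have hNA : absNorm A = p := absNorm_span_natCast_pair hS hp hn hα hpα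
  have hA : A.IsMaximal :=
    (isPrime_of_irreducible_absNorm (hNA ▸ hp.prime.irreducible)).isMaximal
      fun h => hp.ne_zero (by simpa [h] using hNA.symm)
  obtain ⟨k, hk⟩ := exists_eq_pow_of_forall_isPrime_le (I := span {α}) (P := A)
    (fun h => pow_ne_zero n hp.ne_zero (by simpa [h] using hα.symm)) fun Q hQ hαQ => by
      have hαQ := (span_singleton_le_iff_mem Q).mp hαQ
      refine (hA.eq_of_le hQ.ne_top (span_le.mpr ?_)).symm
      simp [Set.insert_subset_iff, natCast_mem_of_absNorm_span_eq_pow hp hα hαQ, hαQ]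
  have hnk : p ^ n = p ^ k := by simpa [hα, hNA] using congrArg absNorm hk
  rwa [Nat.pow_right_injective hp.two_le hnk]

end Ideal

theorem ClassGroup.mk0_pow_eq_one_iff {R : Type*} [CommRing R] [IsDedekindDomain R]
    (I : (Ideal R)⁰) (k : ℕ) : ClassGroup.mk0 I ^ k = 1 ↔ ((I : Ideal R) ^ k).IsPrincipal := by
  rw [← map_pow, ← ClassGroup.mk0_eq_one_iff (SubmonoidClass.coe_pow I k ▸ (I ^ k).2)]
  rfl

namespace QuadraticAlgebra

variable {R : Type*} [CommRing R] {a b : R}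

theorem algebraNorm_eq_norm (z : QuadraticAlgebra R a b) : Algebra.norm R z = z.norm :=
  det_toLinearMap_eq_norm z

theorem algebraTrace_eq_trace (z : QuadraticAlgebra R a b) :
    Algebra.trace R _ z = trace z := by
  rw [Algebra.trace_eq_matrix_trace (basis a b), Matrix.trace_fin_two,
    Algebra.leftMulMatrix_eq_repr_mul, Algebra.leftMulMatrix_eq_repr_mul]
  simp [basis, trace_def]
  ring

end QuadraticAlgebra

/- The number field `K` is presented as `ℚ ⊕ ℚω` with `ω² = -D` through
`e : QuadraticAlgebra ℚ (-D) 0 ≃ₐ[ℚ] K`. -/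
namespace ImaginaryQuadratic

open QuadraticAlgebra

variable {K : Type*} [Field K] [NumberField K] {D : ℕ}

theorem norm_algEquiv_apply (e : QuadraticAlgebra ℚ (-D) 0 ≃ₐ[ℚ] K)
    (z : QuadraticAlgebra ℚ (-D) 0) : Algebra.norm ℚ (e z) = z.re ^ 2 + D * z.im ^ 2 := by
  rw [Algebra.norm_eq_of_algEquiv, algebraNorm_eq_norm, norm_def]
  ring

theorem trace_algEquiv_apply (e : QuadraticAlgebra ℚ (-D) 0 ≃ₐ[ℚ] K)
    (z : QuadraticAlgebra ℚ (-D) 0) : Algebra.trace ℚ K (e z) = 2 * z.re := by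
  rw [Algebra.trace_eq_of_algEquiv, algebraTrace_eq_trace, trace_def]
  ring

def sqrtNeg (e : QuadraticAlgebra ℚ (-D) 0 ≃ₐ[ℚ] K) : 𝓞 K :=
  ⟨e .omega, IsIntegral.of_pow two_pos <| by
    rw [← map_pow, sq, omega_mul_omega_eq_algebraMap]
    simpa using isIntegral_algebraMap (R := ℤ) (A := K) (x := -(D : ℤ))⟩

theorem coe_intCast_add_sqrtNeg (e : QuadraticAlgebra ℚ (-D) 0 ≃ₐ[ℚ] K) (x : ℤ) :
    ((x + sqrtNeg e : 𝓞 K) : K) = e ⟨x, 1⟩ := by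
  rw [mk_eq_add_smul_omega, map_add, map_smul, AlgEquiv.commutes, one_smul, eq_ratCast,
    Rat.cast_intCast]
  rfl

theorem norm_intCast_add_sqrtNeg (e : QuadraticAlgebra ℚ (-D) 0 ≃ₐ[ℚ] K) (x : ℤ) :
    Algebra.norm ℤ (x + sqrtNeg e : 𝓞 K) = x ^ 2 + D := by
  have : ((Algebra.norm ℤ (x + sqrtNeg e : 𝓞 K) : ℤ) : ℚ) = x ^ 2 + D := by
    rw [Algebra.coe_norm_int, coe_intCast_add_sqrtNeg, norm_algEquiv_apply]
    simp
  exact_mod_cast this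

theorem exists_intCast_eq_two_mul_re_im (e : QuadraticAlgebra ℚ (-D) 0 ≃ₐ[ℚ] K)
    (hD : Squarefree D) (β : 𝓞 K) :
    (∃ a : ℤ, (a : ℚ) = 2 * (e.symm β).re) ∧ ∃ b : ℤ, (b : ℚ) = 2 * (e.symm β).im := by
  set z := e.symm β
  have hβ : (β : K) = e z := (e.apply_symm_apply _).symm
  have htr : ((Algebra.trace ℤ (𝓞 K) β : ℤ) : ℚ) = 2 * z.re := by
    rw [Algebra.coe_trace_int, hβ, trace_algEquiv_apply]
  have hN : ((Algebra.norm ℤ β : ℤ) : ℚ) = z.re ^ 2 + D * z.im ^ 2 := by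
    rw [Algebra.coe_norm_int, hβ, norm_algEquiv_apply]
  refine ⟨⟨_, htr⟩, Rat.exists_intCast_eq_of_squarefree_mul_sq hD
    (t := 4 * Algebra.norm ℤ β - Algebra.trace ℤ (𝓞 K) β ^ 2) ?_⟩
  push_cast
  rw [htr, hN]
  ring

theorem exists_four_mul_norm_eq (e : QuadraticAlgebra ℚ (-D) 0 ≃ₐ[ℚ] K) (hD : Squarefree D)
    (β : 𝓞 K) : ∃ a b : ℤ, 4 * Algebra.norm ℤ β = a ^ 2 + D * b ^ 2 := by
  obtain ⟨⟨a, ha⟩, ⟨b, hb⟩⟩ := exists_intCast_eq_two_mul_re_im e hD β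
  refine ⟨a, b, ?_⟩
  have hN : ((Algebra.norm ℤ β : ℤ) : ℚ) = (e.symm β).re ^ 2 + D * (e.symm β).im ^ 2 := by
    rw [Algebra.coe_norm_int, ← norm_algEquiv_apply e, e.apply_symm_apply]
  exact_mod_cast (by rw [hN, ha, hb]; ring : (4 * Algebra.norm ℤ β : ℚ) = a ^ 2 + D * b ^ 2)

theorem not_natCast_dvd_intCast_add_sqrtNeg (e : QuadraticAlgebra ℚ (-D) 0 ≃ₐ[ℚ] K)
    (hD : Squarefree D) {q : ℕ} (hq : 2 < q) (x : ℤ) : ¬ (q : 𝓞 K) ∣ x + sqrtNeg e := by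
  rintro ⟨γ, hγ⟩
  obtain ⟨-, b, hb⟩ := exists_intCast_eq_two_mul_re_im e hD γ
  have him : (1 : ℚ) = q * (e.symm γ).im := by
    simpa [coe_intCast_add_sqrtNeg] using congrArg (fun y : 𝓞 K => (e.symm y).im) hγ
  have hqb : (q : ℤ) * b = 2 := by
    exact_mod_cast (by linear_combination (q : ℚ) * hb - 2 * him : (q : ℚ) * b = 2)
  have := Int.le_of_dvd two_pos ⟨b, hqb.symm⟩
  omega

theorem le_four_mul_of_isPrincipal (e : QuadraticAlgebra ℚ (-D) 0 ≃ₐ[ℚ] K) (hD : Squarefree D)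
    {I : Ideal (𝓞 K)} (hI : I.IsPrincipal) {p m : ℕ} (hp : p.Prime) (hm : Odd m)
    (hN : absNorm I = p ^ m) : D ≤ 4 * p ^ m := by
  obtain ⟨β, rfl⟩ := hI
  rw [submodule_span_eq, absNorm_span_singleton] at hN
  obtain ⟨a, b, hab⟩ := exists_four_mul_norm_eq e hD β
  have hβ : Algebra.norm ℤ β = p ^ m := by
    have h0 : 0 ≤ Algebra.norm ℤ β := by nlinarith [sq_nonneg a, sq_nonneg b]
    rw [← Int.natAbs_of_nonneg h0, hN]
    push_cast
    rfl
  exact_mod_cast le_four_mul_prime_pow_of_four_mul_eq hp hm (hβ ▸ hab)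

theorem exists_orderOf_eq_of_sq_add_eq_prime_pow (e : QuadraticAlgebra ℚ (-D) 0 ≃ₐ[ℚ] K)
    (hD : Squarefree D) {n p : ℕ} (hn : Odd n) (hp : p.Prime) (hp2 : p ≠ 2) {x : ℤ}
    (hx : x ^ 2 + D = p ^ n) (hlt : 2 * x ^ 2 < p ^ n) :
    ∃ c : ClassGroup (𝓞 K), orderOf c = n := by
  set α : 𝓞 K := x + sqrtNeg e
  have hS : Module.finrank ℤ (𝓞 K) = 2 := by
    rw [RingOfIntegers.rank, ← e.toLinearEquiv.finrank_eq, QuadraticAlgebra.finrank_eq_two]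
  have hn0 : n ≠ 0 := hn.pos.ne'
  have hp3 : 3 ≤ p := lt_of_le_of_ne hp.two_le (Ne.symm hp2)
  have hα : absNorm (span {α}) = p ^ n := by
    rw [absNorm_span_singleton, norm_intCast_add_sqrtNeg, hx]
    exact Int.natAbs_pow _ _
  have hpα : ¬ (p : 𝓞 K) ∣ α := not_natCast_dvd_intCast_add_sqrtNeg e hD hp3 x
  set A := span {(p : 𝓞 K), α}
  have hNA : absNorm A = p := absNorm_span_natCast_pair hS hp hn0 hα hpα
  have hA0 : A ∈ (Ideal (𝓞 K))⁰ := absNorm_ne_zero_iff_mem_nonZeroDivisors.mp (hNA ▸ hp.ne_zero)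
  refine ⟨ClassGroup.mk0 ⟨A, hA0⟩,
    orderOf_eq_of_pow_and_pow_div_prime hn.pos ?_ fun q hq hqn => ?_⟩
  · rw [ClassGroup.mk0_pow_eq_one_iff, ← span_singleton_eq_span_natCast_pair_pow hS hp hn0 hα hpα]
    exact ⟨α, rfl⟩
  · rw [Ne, ClassGroup.mk0_pow_eq_one_iff]
    intro hprinc
    have hm : Odd (n / q) := hn.of_dvd_nat (Nat.div_dvd_of_dvd hqn)
    have hD4 := le_four_mul_of_isPrincipal e hD hprinc hp hm (by rw [map_pow, hNA])
    have hq3 : 3 ≤ q := lt_of_le_of_ne hq.two_le fun h =>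
      Nat.not_even_iff_odd.mpr hn (even_iff_two_dvd.mpr (h ▸ hqn))
    have h8 := eight_mul_pow_lt_pow hp3 hm.pos.ne' <| calc
      3 * (n / q) ≤ q * (n / q) := Nat.mul_le_mul_right _ hq3
      _ = n := Nat.mul_div_cancel' hqn
    have hpD : p ^ n < 2 * D := by zify; linarith
    linarith

end ImaginaryQuadratic

theorem Complex.I_mul_sqrt_sq (D : ℕ) : (Complex.I * Real.sqrt D : ℂ) ^ 2 = -D := by
  rw [mul_pow, Complex.I_sq, ← Complex.ofReal_pow, Real.sq_sqrt D.cast_nonneg]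
  push_cast
  ring

instance (D : ℕ) : NumberField ℚ⟮(Complex.I * Real.sqrt D : ℂ)⟯ where
  to_finiteDimensional := adjoin.finiteDimensional <| IsIntegral.of_pow two_pos <| by
    simpa [Complex.I_mul_sqrt_sq] using isIntegral_algebraMap (R := ℚ) (A := ℂ) (x := -(D : ℚ))

noncomputable def liftAdjoin (D : ℕ) :
    QuadraticAlgebra ℚ (-D) 0 →ₐ[ℚ] ℚ⟮(Complex.I * Real.sqrt D : ℂ)⟯ :=
  QuadraticAlgebra.lift ⟨AdjoinSimple.gen ℚ (Complex.I * Real.sqrt D : ℂ), by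
    apply Subtype.ext
    simp [← sq, Complex.I_mul_sqrt_sq]⟩

theorem liftAdjoin_omega (D : ℕ) :
    (liftAdjoin D .omega : ℂ) = Complex.I * Real.sqrt D := by
  simp [liftAdjoin]

noncomputable def quadraticAlgebraEquivAdjoin (D : ℕ) (hD : D ≠ 0) :
    QuadraticAlgebra ℚ (-D) 0 ≃ₐ[ℚ] ℚ⟮(Complex.I * Real.sqrt D : ℂ)⟯ :=
  haveI : Fact (∀ r : ℚ, r ^ 2 ≠ -D + 0 * r) := ⟨fun r h => by
    have : (0 : ℚ) < D := by exact_mod_cast Nat.pos_of_ne_zero hD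
    nlinarith [sq_nonneg r]⟩
  AlgEquiv.ofBijective (liftAdjoin D) ⟨(liftAdjoin D).toRingHom.injective, fun y => by
    have hle : ℚ⟮(Complex.I * Real.sqrt D : ℂ)⟯ ≤
        ((IntermediateField.val _).comp (liftAdjoin D)).fieldRange := by
      rw [adjoin_simple_le_iff]
      exact ⟨.omega, liftAdjoin_omega D⟩
    obtain ⟨z, hz⟩ := hle y.2
    exact ⟨z, Subtype.ext hz⟩⟩

theorem stmt2_general (n : ℕ) (hodd : Odd n)
    (D : ℕ) (hD : Squarefree D)
    (p : ℕ) (hp : p.Prime) (hpmod : p % 4 = 3)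
    (x : ℤ) (hx : x ^ 2 + (D : ℤ) = (p : ℤ) ^ n)
    (hlt : 2 * x ^ 2 < (p : ℤ) ^ n) :
    ∃ c : ClassGroup (𝓞 ℚ⟮(Complex.I * Real.sqrt D : ℂ)⟯), orderOf c = n :=
  ImaginaryQuadratic.exists_orderOf_eq_of_sq_add_eq_prime_pow
    (quadraticAlgebraEquivAdjoin D hD.ne_zero) hD hodd hp (by omega) hx hlt

theorem stmt2 (n : ℕ) (hn : 1 < n) (hodd : Odd n)
    (D : ℕ) (hD : Squarefree D) (hDpos : 0 < D)
    (p : ℕ) (hp : p.Prime) (hpmod : p % 4 = 3)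
    (x : ℤ) (hx : x ^ 2 + (D : ℤ) = (p : ℤ) ^ n)
    (hlt : 2 * x ^ 2 < (p : ℤ) ^ n) :
    ∃ c : ClassGroup (𝓞 ℚ⟮(Complex.I * Real.sqrt D : ℂ)⟯), orderOf c = n :=
  stmt2_general n hodd D hD p hp hpmod x hx hlt
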